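/- arXiv:2111.02940 — 3 statements merged into one kernel-verified Lean document; each statement's English description precedes it below -/
import Mathlib

section
/- Let Z be an (n+1)×(m+1) matrix over a field K such that both the first k rows of Z and the first k columns of Z are linearly independent (where k < min{n+1, m+1}). If the determinant of the top left k×k submatrix of Z vanishes, then rank(Z) ≥ k+1. -/
/-!
If `rank Z ≤ k`, the `k` independent chosen columns of `Z` span its column space, so
`Z = C * D` where `C` consists of those columns. Restricting to the chosen rows gives
`R = A * D` with `A` the chosen `k × k` block, and since the rows of `R` are independent,
so are those of `A`, i.e. `det A ≠ 0`.
-/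

open Module Submodule

namespace Matrix

variable {K m n ι : Type*} [Field K] [Fintype n] [Fintype ι]

theorem span_col_comp_eq_of_rank_le {Z : Matrix m n K} {f : ι → n}
    (hf : LinearIndependent K (Z.col ∘ f)) (hrank : Z.rank ≤ Fintype.card ι) :
    span K (Set.range (Z.col ∘ f)) = span K (Set.range Z.col) := by
  have := FiniteDimensional.span_of_finite K (Set.finite_range Z.col)
  refine eq_of_le_of_finrank_le (span_mono (Set.range_comp_subset_range f Z.col)) ?_
  rwa [finrank_span_eq_card hf, ← rank_eq_finrank_span_cols]

theorem exists_eq_submatrix_mul_of_rank_le {Z : Matrix m n K} {f : ι → n}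
    (hf : LinearIndependent K (Z.col ∘ f)) (hrank : Z.rank ≤ Fintype.card ι) :
    ∃ D : Matrix ι n K, Z = Z.submatrix id f * D := by
  have hmem (j : n) : Z.col j ∈ span K (Set.range (Z.col ∘ f)) := by
    rw [span_col_comp_eq_of_rank_le hf hrank]
    exact subset_span ⟨j, rfl⟩
  choose d hd using fun j => (mem_span_range_iff_exists_fun K).mp (hmem j)
  refine ⟨of fun t j => d j t, ?_⟩
  ext i j
  simpa [mul_apply, mul_comm] using (congrFun (hd j) i).symm

theorem card_lt_rank_of_det_submatrix_eq_zero [DecidableEq ι] {Z : Matrix m n K}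
    {g : ι → m} {f : ι → n} (hrows : LinearIndependent K (Z.row ∘ g))
    (hcols : LinearIndependent K (Z.col ∘ f)) (hdet : (Z.submatrix g f).det = 0) :
    Fintype.card ι < Z.rank := by
  by_contra! hrank
  obtain ⟨D, hD⟩ := exists_eq_submatrix_mul_of_rank_le hcols hrank
  have hrowsD : Z.row ∘ g = D.vecMulLinear ∘ (Z.submatrix g f).row := by
    ext i j
    conv_lhs => rw [hD]
    rfl
  have hA : IsUnit (Z.submatrix g f) :=
    linearIndependent_rows_iff_isUnit.mp (LinearIndependent.of_comp _ (hrowsD ▸ hrows))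
  exact (isUnit_iff_isUnit_det _).mp hA |>.ne_zero hdet

end Matrix

/-- Let `Z` be an `(n+1) × (m+1)` matrix over a field `K` such that both
the first `k` rows and the first `k` columns of `Z` are linearly independent (where
`k < min (n+1) (m+1)`). If the determinant of the top-left `k × k` submatrix of `Z`
vanishes, then `rank Z ≥ k + 1`. -/
theorem rank_ge_succ_of_rows_cols_indep_of_det_topLeft_eq_zero
    {K : Type*} [Field K] {n m k : ℕ} (hk : k < min (n + 1) (m + 1))
    (Z : Matrix (Fin (n + 1)) (Fin (m + 1)) K)
    (hrows : LinearIndependent K (fun i : Fin k => Z (Fin.castLE (by omega) i)))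
    (hcols : LinearIndependent K (fun j : Fin k => Z.transpose (Fin.castLE (by omega) j)))
    (hdet : (Z.submatrix (Fin.castLE (by omega)) (Fin.castLE (by omega)) :
      Matrix (Fin k) (Fin k) K).det = 0) :
    k + 1 ≤ Z.rank := by
  simpa using Matrix.card_lt_rank_of_det_submatrix_eq_zero hrows hcols hdet
end

section
/- Let Z be an (n+1)×(m+1) matrix of rank at most k over a field, and suppose the top left k×k minor of Z vanishes. Then one of the following holds: the k×k minors formed from the first k rows of Z all vanish, or the k×k minors formed from the first k columns of Z all vanish (where k < min{n+1,m+1}). -/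
/-!
A matrix of rank at most `k` factors as `Z = U * V` through `K^k`. Each `k × k` minor of `Z`
then splits as `det (rows of U) * det (columns of V)`, so the vanishing of the top-left minor
forces either `det` of the top `k` rows of `U` or `det` of the left `k` columns of `V` to vanish,
and with it every minor on the first `k` rows, resp. on the first `k` columns.
-/

theorem LinearMap.exists_comp_eq_of_finrank_range_le {K V W E : Type*} [Field K]
    [AddCommGroup V] [Module K V] [AddCommGroup W] [Module K W] [AddCommGroup E] [Module K E]
    [FiniteDimensional K E] (f : V →ₗ[K] W) [FiniteDimensional K (LinearMap.range f)]
    (hf : Module.finrank K (LinearMap.range f) ≤ Module.finrank K E) :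
    ∃ (g : V →ₗ[K] E) (h : E →ₗ[K] W), h ∘ₗ g = f := by
  obtain ⟨j, hj⟩ := finrank_le_iff_exists_linearMap.mp hf
  obtain ⟨l, hl⟩ := j.exists_leftInverse_of_injective (LinearMap.ker_eq_bot.mpr hj)
  refine ⟨j ∘ₗ f.rangeRestrict, (LinearMap.range f).subtype ∘ₗ l, ?_⟩
  rw [LinearMap.comp_assoc, ← LinearMap.comp_assoc f.rangeRestrict, hl, LinearMap.id_comp]
  rfl

theorem Matrix.exists_eq_mul_of_rank_le {K m n ι : Type*} [Field K] [Fintype n]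
    [DecidableEq n] [Fintype ι] [DecidableEq ι] (A : Matrix m n K)
    (hA : A.rank ≤ Fintype.card ι) :
    ∃ (U : Matrix m ι K) (V : Matrix ι n K), A = U * V := by
  obtain ⟨g, h, hgh⟩ := A.mulVecLin.exists_comp_eq_of_finrank_range_le
    (E := ι → K) (by rwa [Module.finrank_fintype_fun_eq_card])
  refine ⟨LinearMap.toMatrix' h, LinearMap.toMatrix' g, ?_⟩
  rw [← LinearMap.toMatrix'_comp, hgh, ← Matrix.toLin'_apply', LinearMap.toMatrix'_toLin']

theorem Matrix.exists_det_submatrix_eq_mul_of_rank_le {K m n ι : Type*} [Field K]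
    [Fintype n] [DecidableEq n] [Fintype ι] [DecidableEq ι] (A : Matrix m n K)
    (hA : A.rank ≤ Fintype.card ι) :
    ∃ (p : (ι → m) → K) (q : (ι → n) → K), ∀ r c, (A.submatrix r c).det = p r * q c := by
  obtain ⟨U, V, rfl⟩ := A.exists_eq_mul_of_rank_le hA
  exact ⟨fun r => (U.submatrix r id).det, fun c => (V.submatrix id c).det,
    fun r c => det_mul (U.submatrix r id) (V.submatrix id c)⟩

/-- Let `Z` be an `(n+1) × (m+1)` matrix of rank at most `k` over a
field, with `k < min (n+1) (m+1)`, and suppose the top-left `k × k` minor of `Z`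
vanishes. Then either all `k × k` minors formed from the first `k` rows of `Z` vanish,
or all `k × k` minors formed from the first `k` columns of `Z` vanish. -/
theorem row_minors_vanish_or_col_minors_vanish
    {K : Type*} [Field K] {n m k : ℕ} (hk : k < min (n + 1) (m + 1))
    (Z : Matrix (Fin (n + 1)) (Fin (m + 1)) K)
    (hrank : Z.rank ≤ k)
    (hdet : (Z.submatrix (Fin.castLE (by omega)) (Fin.castLE (by omega)) :
      Matrix (Fin k) (Fin k) K).det = 0) :
    (∀ c : Fin k → Fin (m + 1),
      (Z.submatrix (Fin.castLE (by omega : k ≤ n + 1)) c).det = 0) ∨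
    (∀ r : Fin k → Fin (n + 1),
      (Z.submatrix r (Fin.castLE (by omega : k ≤ m + 1))).det = 0) := by
  obtain ⟨p, q, hpq⟩ := Z.exists_det_submatrix_eq_mul_of_rank_le (ι := Fin k)
    (by rwa [Fintype.card_fin])
  rw [hpq] at hdet
  rcases mul_eq_zero.mp hdet with hp | hq
  · exact Or.inl fun c => by rw [hpq, hp, zero_mul]
  · exact Or.inr fun r => by rw [hpq, hq, mul_zero]
end

section
/- In ℝ³ with basis H, E_1, E_2, set D_1 = (1,0,0), D_2 = (2,−1,0), D_3 = (3,−2,−1), E_1 = (0,1,0), E_2 = (0,0,1). Then the anticanonical class −K = (3(n+1)/2)·(1,0,0) − (n−1)·(0,1,0) − ((n−3)/2)·(0,0,1) of Q(n,3) satisfies −K = 2D_1 + 2D_2 + ((n−3)/2)·D_3; consequently −K lies in the interior of cone(D_1, D_2, D_3) for n ≥ 4 and on its boundary for n = 3. -/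
namespace Stmt13

noncomputable def E1 : Fin 3 → ℝ := ![0, 1, 0]
noncomputable def E2 : Fin 3 → ℝ := ![0, 0, 1]
noncomputable def D1 : Fin 3 → ℝ := ![1, 0, 0]          -- D₁ = H
noncomputable def D2 : Fin 3 → ℝ := ![2, -1, 0]         -- D₂ = 2H - E₁
noncomputable def D3 : Fin 3 → ℝ := ![3, -2, -1]        -- D₃ = 3H - 2E₁ - E₂

/-- The anticanonical class `-K_{Q(n,3)} = (3(n+1)/2)H - (n-1)E₁ - ((n-3)/2)E₂`. -/
noncomputable def antiK (n : ℕ) : Fin 3 → ℝ :=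
  (3 * ((n : ℝ) + 1) / 2) • D1 - ((n : ℝ) - 1) • E1 - (((n : ℝ) - 3) / 2) • E2

/-- The nef cone of `Q(n,3)`: the cone generated by `D₁, D₂, D₃`. -/
def nefCone : Set (Fin 3 → ℝ) :=
  {v | ∃ a b c : ℝ, 0 ≤ a ∧ 0 ≤ b ∧ 0 ≤ c ∧ v = a • D1 + b • D2 + c • D3}

/-!
Since `D₁, D₂, D₃` is a basis of `ℝ³`, passing to coordinates in this basis is a homeomorphism
carrying the nef cone onto the closed positive orthant. Hence the interior of the cone consists of
the classes all of whose coordinates are positive, and the coordinates of `-K` are `(2, 2, (n-3)/2)`.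
-/

theorem interior_Ici_pi {ι α : Type*} [Finite ι] [LinearOrder α] [TopologicalSpace α]
    [OrderTopology α] [DenselyOrdered α] [NoMinOrder α] (a : ι → α) :
    interior (Set.Ici a) = {x | ∀ i, a i < x i} := by
  rw [← Set.pi_univ_Ici, interior_pi_set Set.finite_univ]
  ext x
  simp

noncomputable def nefCoords : (Fin 3 → ℝ) ≃ₜ (Fin 3 → ℝ) where
  toFun v := ![v 0 + 2 * v 1 - v 2, -v 1 + 2 * v 2, -v 2]
  invFun c := c 0 • D1 + c 1 • D2 + c 2 • D3
  left_inv v := by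
    funext i
    fin_cases i <;> simp [D1, D2, D3] <;> ring
  right_inv c := by
    funext i
    fin_cases i <;> simp [D1, D2, D3] <;> ring
  continuous_toFun := by fun_prop
  continuous_invFun := by fun_prop

theorem nefCone_eq_image : nefCone = nefCoords.symm '' Set.Ici 0 := by
  ext v
  constructor
  · rintro ⟨a, b, c, ha, hb, hc, rfl⟩
    refine ⟨![a, b, c], fun i => ?_, rfl⟩
    fin_cases i <;> simpa
  · rintro ⟨c, hc, rfl⟩
    exact ⟨c 0, c 1, c 2, hc 0, hc 1, hc 2, rfl⟩

theorem interior_nefCone : interior nefCone = {v | ∀ i, 0 < nefCoords v i} := by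
  rw [nefCone_eq_image, ← nefCoords.symm.image_interior, interior_Ici_pi, Homeomorph.image_symm]
  rfl

theorem antiK_eq (n : ℕ) : antiK n = (2 : ℝ) • D1 + (2 : ℝ) • D2 + (((n : ℝ) - 3) / 2) • D3 := by
  funext i
  fin_cases i <;> simp [antiK, D1, D2, D3, E1, E2] <;> ring

theorem nefCoords_antiK (n : ℕ) : nefCoords (antiK n) = ![2, 2, ((n : ℝ) - 3) / 2] := by
  rw [antiK_eq, ← nefCoords.apply_symm_apply ![2, 2, ((n : ℝ) - 3) / 2]]
  rfl

theorem antiK_position_general (n : ℕ) :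
    antiK n = (2 : ℝ) • D1 + (2 : ℝ) • D2 + (((n : ℝ) - 3) / 2) • D3 ∧
    (4 ≤ n → antiK n ∈ interior nefCone) ∧
    (n = 3 → antiK n ∈ nefCone ∧ antiK n ∉ interior nefCone) := by
  refine ⟨antiK_eq n, fun hn => ?_, ?_⟩
  · have hn' : (4 : ℝ) ≤ n := by exact_mod_cast hn
    rw [interior_nefCone, Set.mem_ofPred_eq, nefCoords_antiK]
    intro i
    fin_cases i
    · norm_num
    · norm_num
    · simp only [Fin.reduceFinMk, Matrix.cons_val]
      linarith
  · rintro rfl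
    refine ⟨⟨2, 2, 0, by norm_num, by norm_num, le_rfl, by rw [antiK_eq]; norm_num⟩, ?_⟩
    rw [interior_nefCone, Set.mem_ofPred_eq, nefCoords_antiK]
    intro h
    simpa using h 2

/-- The anticanonical class
`-K = (3(n+1)/2)H - (n-1)E₁ - ((n-3)/2)E₂` of `Q(n,3)` satisfies
`-K = 2D₁ + 2D₂ + ((n-3)/2)D₃`; consequently `-K` lies in the interior of
`cone(D₁, D₂, D₃)` for `n ≥ 4` (so `Q(n,3)` is Fano) and on its boundary for `n = 3`
(so `Q(3,3)` is weak Fano). -/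
theorem antiK_position (n : ℕ) (hn : 3 ≤ n) :
    antiK n = (2 : ℝ) • D1 + (2 : ℝ) • D2 + (((n : ℝ) - 3) / 2) • D3 ∧
    (4 ≤ n → antiK n ∈ interior nefCone) ∧
    (n = 3 → antiK n ∈ nefCone ∧ antiK n ∉ interior nefCone) :=
  antiK_position_general n

end Stmt13
end
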